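/- arXiv:1710.05324 — 3 statements merged into one kernel-verified Lean document; each statement's English description precedes it below -/
import Mathlib

section
/- Every abstract group homomorphism f : G → H between compact abelian p-adic Lie groups is automatically continuous. -/
/-!
The open subgroups of a CPA group `H` form a basis of neighbourhoods of `0` (as they do in
`ℤ_p^n`), and by compactness each of them has finite index. Conversely, every finite-index
subgroup `A` of a CPA group `G` is open: its trace on an open copy of `ℤ_p^n` has some finite
index `m`, so it contains `m • ℤ_p^n`, which is a neighbourhood of `0` because `m ≠ 0` in `ℤ_p`.
Hence the preimage under `f` of a small open subgroup of `H` is an open subgroup of `G`.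
-/

/-- A compact abelian `p`-adic Lie group (CPA group): a compact abelian topological group
containing an open subgroup topologically isomorphic to `ℤ_p^n` for some finite `n`. -/
def IsCPA (p : ℕ) [Fact p.Prime] (G : Type*) [AddCommGroup G] [TopologicalSpace G] : Prop :=
  IsTopologicalAddGroup G ∧ CompactSpace G ∧
    ∃ (n : ℕ) (H : AddSubgroup G), IsOpen (H : Set G) ∧
      ∃ e : H ≃ₜ (Fin n → ℤ_[p]), ∀ x y : H, e (x + y) = e x + e y

@[to_additive]
instance Subgroup.finiteIndex_comap {G H : Type*} [Group G] [Group H] (f : G →* H)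
    (A : Subgroup H) [A.FiniteIndex] : (A.comap f).FiniteIndex where
  index_ne_zero := by
    simpa using Subgroup.relIndex_comap_ne_zero f (K := ⊤)
      (by simpa using Subgroup.FiniteIndex.index_ne_zero (H := A))

namespace PadicInt

variable {p : ℕ} [Fact p.Prime]

theorem dvd_of_norm_le {x y : ℤ_[p]} (hx : x ≠ 0) (h : ‖y‖ ≤ ‖x‖) : x ∣ y := by
  have hx' : (x : ℚ_[p]) ≠ 0 := fun h ↦ hx (PadicInt.ext h)
  refine ⟨⟨(y : ℚ_[p]) / x, ?_⟩, PadicInt.ext (mul_div_cancel₀ _ hx').symm⟩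
  rw [norm_div]
  exact div_le_one_of_le₀ h (norm_nonneg _)

theorem isOpen_of_finiteIndex {ι : Type*} [Fintype ι] (C : AddSubgroup (ι → ℤ_[p]))
    [C.FiniteIndex] : IsOpen (C : Set (ι → ℤ_[p])) := by
  have hm : (C.index : ℤ_[p]) ≠ 0 := Nat.cast_ne_zero.2 AddSubgroup.FiniteIndex.index_ne_zero
  refine C.isOpen_of_mem_nhds (g := 0) <|
    Filter.mem_of_superset (Metric.closedBall_mem_nhds 0 (norm_pos_iff.2 hm)) fun y hy ↦ ?_
  have hdvd (i : ι) : (C.index : ℤ_[p]) ∣ y i :=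
    dvd_of_norm_le hm ((norm_le_pi_norm y i).trans (mem_closedBall_zero_iff.1 hy))
  choose z hz using hdvd
  have hy' : y = C.index • z := by
    ext i
    simp [hz i, nsmul_eq_mul]
  exact hy' ▸ C.nsmul_index_mem z

end PadicInt

@[to_additive]
theorem Subgroup.isOpen_of_finiteIndex_of_isOpenEmbedding {M G : Type*} [Group M]
    [TopologicalSpace M] [Group G] [TopologicalSpace G] [SeparatelyContinuousMul G]
    (φ : M →* G) (hφ : Topology.IsOpenEmbedding φ)
    (hM : ∀ C : Subgroup M, C.FiniteIndex → IsOpen (C : Set M))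
    (A : Subgroup G) [A.FiniteIndex] : IsOpen (A : Set G) :=
  Subgroup.isOpen_mono (Subgroup.map_comap_le φ A) <| by
    rw [Subgroup.coe_map]
    exact hφ.isOpenMap _ (hM _ inferInstance)

@[to_additive]
theorem MonoidHom.continuous_of_forall_finiteIndex_isOpen {G H : Type*} [Group G]
    [TopologicalSpace G] [IsTopologicalGroup G] [Group H] [TopologicalSpace H]
    [NonarchimedeanGroup H] [CompactSpace H]
    (hG : ∀ A : Subgroup G, A.FiniteIndex → IsOpen (A : Set G)) (f : G →* H) :
    Continuous f := by
  refine continuous_of_continuousAt_one f fun W hW ↦ ?_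
  rw [map_one] at hW
  obtain ⟨V, hVW⟩ := NonarchimedeanGroup.is_nonarchimedean W hW
  have : Finite (H ⧸ V.toSubgroup) := V.toSubgroup.quotient_finite_of_isOpen V.isOpen
  have : V.toSubgroup.FiniteIndex := Subgroup.finiteIndex_of_finite_quotient
  have hA : IsOpen ((V.toSubgroup.comap f : Subgroup G) : Set G) := hG _ inferInstance
  exact Filter.mem_of_superset (hA.mem_nhds (one_mem _)) fun x hx ↦ hVW hx

theorem IsCPA.exists_isOpenEmbedding {p : ℕ} [Fact p.Prime] {G : Type*} [AddCommGroup G]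
    [TopologicalSpace G] (hG : IsCPA p G) :
    ∃ (n : ℕ) (φ : (Fin n → ℤ_[p]) →+ G), Topology.IsOpenEmbedding φ := by
  obtain ⟨-, -, n, U, hU, e, he⟩ := hG
  exact ⟨n, U.subtype.comp (AddEquiv.mk' e.toEquiv he).symm.toAddMonoidHom,
    hU.isOpenEmbedding_subtypeVal.comp e.symm.isOpenEmbedding⟩

/-- Every abstract group homomorphism between compact abelian `p`-adic Lie groups is
automatically continuous. -/
theorem stmt2 (p : ℕ) [Fact p.Prime]
    (G H : Type*) [AddCommGroup G] [TopologicalSpace G] [AddCommGroup H] [TopologicalSpace H]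
    (hG : IsCPA p G) (hH : IsCPA p H) (f : G →+ H) :
    Continuous f := by
  have : IsTopologicalAddGroup G := hG.1
  have : IsTopologicalAddGroup H := hH.1
  have : CompactSpace H := hH.2.1
  obtain ⟨nG, φ, hφ⟩ := hG.exists_isOpenEmbedding
  obtain ⟨nH, ψ, hψ⟩ := hH.exists_isOpenEmbedding
  have : NonarchimedeanAddGroup H := NonarchimedeanAddGroup.nonarchimedean_of_emb ψ hψ
  exact f.continuous_of_forall_finiteIndex_isOpen fun A _ ↦
    A.isOpen_of_finiteIndex_of_isOpenEmbedding φ hφ fun C _ ↦ PadicInt.isOpen_of_finiteIndex C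
end

section
/- Let A be a reduced commutative Noetherian ring, M a finite projective A-module, and X ⊆ Spec(A) a Zariski-dense set of primes. Then the natural map End_A(M) → ∏_{𝔭 ∈ X} End_{κ(𝔭)}(M ⊗_A κ(𝔭)) is injective, where κ(𝔭) denotes the residue field at 𝔭. Consequently, if a commutative A-subalgebra B ⊆ End_A(M) has reduced image in End_{κ(𝔭)}(M ⊗_A κ(𝔭)) for every 𝔭 ∈ X, then B is reduced. -/
/-!
Over a reduced ring, an element lying in every prime of a dense set lies in the nilradical, hence
is zero. For a projective `M` the coordinates `φ (f m)`, `φ ∈ M^∨`, detect `f m`, and they map to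
zero in the residue field at `𝔭` whenever the base change of `f` vanishes there; so they lie in
every `𝔭 ∈ X`, and `f = 0`. Reducedness of `B` follows: a nilpotent `b ∈ B` has nilpotent, hence
zero, base change at every `𝔭 ∈ X`.
-/

universe u

open TensorProduct

theorem PrimeSpectrum.eq_zero_of_forall_mem_of_dense {A : Type*} [CommRing A] [IsReduced A]
    {X : Set (PrimeSpectrum A)} (hX : Dense X) {a : A} (ha : ∀ p ∈ X, a ∈ p.asIdeal) :
    a = 0 := by
  have hmem : a ∈ vanishingIdeal X := (mem_vanishingIdeal X a).2 ha
  rw [← vanishingIdeal_closure, hX.closure_eq, vanishingIdeal_univ, nilradical_eq_zero] at hmem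
  exact hmem

theorem IsFractionRing.ker_algebraMap_quotient {A K : Type*} [CommRing A] [CommRing K]
    (p : Ideal A) [Algebra A K] [Algebra (A ⧸ p) K] [IsScalarTower A (A ⧸ p) K]
    [IsFractionRing (A ⧸ p) K] : RingHom.ker (algebraMap A K) = p := by
  rw [IsScalarTower.algebraMap_eq A (A ⧸ p) K,
    RingHom.ker_comp_of_injective _ (IsFractionRing.injective (A ⧸ p) K),
    Ideal.Quotient.algebraMap_eq, Ideal.mk_ker]

theorem algebraMap_dual_apply_eq_zero_of_one_tmul_eq_zero {A M K : Type*} [CommRing A]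
    [AddCommGroup M] [Module A M] [CommRing K] [Algebra A K] (φ : Module.Dual A M) {m : M}
    (hm : (1 : K) ⊗ₜ[A] m = 0) : algebraMap A K (φ m) = 0 := by
  simpa [Module.Dual.baseChange_apply_tmul, Algebra.algebraMap_eq_smul_one] using
    congrArg (φ.baseChange K) hm

theorem Module.Projective.eq_zero_of_forall_one_tmul_eq_zero {A M : Type*} [CommRing A]
    [IsReduced A] [AddCommGroup M] [Module A M] [Module.Projective A M]
    {X : Set (PrimeSpectrum A)} (hX : Dense X) (K : PrimeSpectrum A → Type*)
    [∀ p, CommRing (K p)] [∀ p, Algebra A (K p)]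
    (hK : ∀ p ∈ X, RingHom.ker (algebraMap A (K p)) ≤ p.asIdeal) {m : M}
    (hm : ∀ p ∈ X, (1 : K p) ⊗ₜ[A] m = 0) : m = 0 := by
  refine (Module.forall_dual_apply_eq_zero_iff A m).1 fun φ ↦ ?_
  exact PrimeSpectrum.eq_zero_of_forall_mem_of_dense hX fun p hp ↦
    hK p hp (algebraMap_dual_apply_eq_zero_of_one_tmul_eq_zero φ (hm p hp))

theorem LinearMap.eq_zero_of_forall_baseChange_eq_zero {A N M : Type*} [CommRing A]
    [IsReduced A] [AddCommGroup N] [Module A N] [AddCommGroup M] [Module A M]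
    [Module.Projective A M] {X : Set (PrimeSpectrum A)} (hX : Dense X)
    (K : PrimeSpectrum A → Type*) [∀ p, CommRing (K p)] [∀ p, Algebra A (K p)]
    (hK : ∀ p ∈ X, RingHom.ker (algebraMap A (K p)) ≤ p.asIdeal) {f : N →ₗ[A] M}
    (hf : ∀ p ∈ X, f.baseChange (K p) = 0) : f = 0 := by
  ext n
  refine Module.Projective.eq_zero_of_forall_one_tmul_eq_zero hX K hK fun p hp ↦ ?_
  simpa using congrArg (· ((1 : K p) ⊗ₜ[A] n)) (hf p hp)

/-- Let `A` be a reduced commutative Noetherian ring, `M` a finite projective `A`-module and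
`X ⊆ Spec A` a Zariski-dense set of primes.  For each prime `𝔭` let `k 𝔭` be the residue
field at `𝔭` (a field which is the fraction field of `A/𝔭`).  Then the natural base-change
map `End_A(M) → ∏_{𝔭 ∈ X} End_{k 𝔭}(k 𝔭 ⊗_A M)` is injective; consequently any commutative
`A`-subalgebra `B ⊆ End_A(M)` whose image in each `End_{k 𝔭}(k 𝔭 ⊗_A M)`, `𝔭 ∈ X`, is
reduced, is itself reduced. -/
theorem stmt13 (A : Type u) [CommRing A] [IsNoetherianRing A] [IsReduced A]
    (M : Type u) [AddCommGroup M] [Module A M] [Module.Finite A M] [Module.Projective A M]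
    (X : Set (PrimeSpectrum A)) (hX : Dense X)
    (k : PrimeSpectrum A → Type u) [∀ p, Field (k p)] [∀ p, Algebra A (k p)]
    [∀ p : PrimeSpectrum A, Algebra (A ⧸ p.asIdeal) (k p)]
    [∀ p : PrimeSpectrum A, IsScalarTower A (A ⧸ p.asIdeal) (k p)]
    [∀ p : PrimeSpectrum A, IsFractionRing (A ⧸ p.asIdeal) (k p)] :
    Function.Injective
        (fun (f : Module.End A M) => fun q : X => LinearMap.baseChange (k q.1) f) ∧
      ∀ B : Subalgebra A (Module.End A M),
        (∀ x ∈ B, ∀ y ∈ B, x * y = y * x) →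
        (∀ p ∈ X, ∀ b ∈ B, IsNilpotent (LinearMap.baseChange (k p) b) →
          LinearMap.baseChange (k p) b = 0) →
        IsReduced B := by
  have hK : ∀ p ∈ X, RingHom.ker (algebraMap A (k p)) ≤ p.asIdeal := fun p _ ↦
    (IsFractionRing.ker_algebraMap_quotient p.asIdeal).le
  have eq_zero : ∀ f : Module.End A M, (∀ p ∈ X, f.baseChange (k p) = 0) → f = 0 := fun _ ↦
    LinearMap.eq_zero_of_forall_baseChange_eq_zero hX k hK
  refine ⟨fun f g hfg ↦ sub_eq_zero.1 <| eq_zero _ fun p hp ↦ ?_, fun B _ hB ↦ ⟨?_⟩⟩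
  · rw [LinearMap.baseChange_sub]
    exact sub_eq_zero.2 (congrFun hfg ⟨p, hp⟩)
  · rintro ⟨b, hb⟩ ⟨n, hn⟩
    have hbn : b ^ n = 0 := congrArg Subtype.val hn
    refine Subtype.ext <| eq_zero b fun p hp ↦ hB p hp b hb ⟨n, ?_⟩
    rw [← LinearMap.baseChange_pow, hbn, LinearMap.baseChange_zero]
end

section
/- Let R be a ℚ_p-Banach algebra with ring of definition R₀, let M be a potentially orthonormalizable R-Banach module, and let M₀ be any open bounded R₀-submodule of M. Then the natural map Hom_{R₀}(M₀, R₀)[1/p] → Hom_{R,cont}(M, R) is an isomorphism onto the continuous R-linear dual M′ of M; moreover the topology on M′ (the operator-norm topology) coincides with the gauge topology defined by the R₀-submodule Hom_{R₀}(M₀, R₀). -/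
/-!
An open bounded `R₀`-submodule `M₀` is a lattice in `M`: multiplying by powers of `p` pushes any
vector into `M₀` and shrinks `M₀` into any neighbourhood of `0`. Hence an `R₀`-linear
`φ : M₀ → R₀` extends to `M` by `x ↦ p⁻ⁿ φ(pⁿ x)` for any `n` with `pⁿ x ∈ M₀`. Rescaling a
vector by a power of a scalar of norm `> 1` into a shell around the ball inside `M₀` gives a
bound `‖f x‖ ≤ C ‖x‖` with `C` uniform over all `f` mapping `M₀` into `R₀`; this yields both the
continuity of the extension and the boundedness of the lattice `Hom_{R₀}(M₀, R₀)`.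
-/

universe u

open Filter Topology Set

section Extension

variable {𝕜 R M : Type*} [Field 𝕜] [Ring R] [Algebra 𝕜 R] [AddCommGroup M] [Module R M]
  [Module 𝕜 M] [IsScalarTower 𝕜 R M]

theorem pow_smul_mem_of_le {R₀ : Subring R} {M₀ : Set M} {c : 𝕜}
    (hcR₀ : algebraMap 𝕜 R c ∈ R₀) (hsmul : ∀ r ∈ R₀, ∀ x ∈ M₀, r • x ∈ M₀)
    {x : M} {m n : ℕ} (hmn : m ≤ n) (hx : c ^ m • x ∈ M₀) : c ^ n • x ∈ M₀ := by
  obtain ⟨k, rfl⟩ := Nat.exists_eq_add_of_le' hmn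
  rw [pow_add, mul_smul, ← algebraMap_smul R, map_pow]
  exact hsmul _ (pow_mem hcR₀ k) _ hx

theorem inv_pow_smul_apply_pow_smul_eq {R₀ : Subring R} {M₀ : Set M} {c : 𝕜} (hc : c ≠ 0)
    (hcR₀ : algebraMap 𝕜 R c ∈ R₀) {φ : M → R} (hφsmul : ∀ r ∈ R₀, ∀ x ∈ M₀, φ (r • x) = r * φ x)
    {x : M} {m n : ℕ} (hm : c ^ m • x ∈ M₀) (hn : c ^ n • x ∈ M₀) :
    (c ^ m)⁻¹ • φ (c ^ m • x) = (c ^ n)⁻¹ • φ (c ^ n • x) := by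
  have raise : ∀ {i : ℕ} (k : ℕ), c ^ i • x ∈ M₀ →
      (c ^ (i + k))⁻¹ • φ (c ^ (i + k) • x) = (c ^ i)⁻¹ • φ (c ^ i • x) := by
    intro i k hi
    have hk : algebraMap 𝕜 R (c ^ k) ∈ R₀ := by rw [map_pow]; exact pow_mem hcR₀ k
    rw [pow_add, mul_comm, mul_smul, ← algebraMap_smul R (c ^ k), hφsmul _ hk _ hi,
      ← Algebra.smul_def, smul_smul]
    congr 1
    field_simp
  rw [← raise n hm, ← raise m hn, add_comm]

theorem exists_linearMap_eqOn_of_absorbing (R₀ : Subring R) {M₀ : Set M} {c : 𝕜} (hc : c ≠ 0)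
    (hcR₀ : algebraMap 𝕜 R c ∈ R₀) (hR₀ : ∀ r : R, ∃ n : ℕ, c ^ n • r ∈ R₀)
    (hM₀ : ∀ x : M, ∃ n : ℕ, c ^ n • x ∈ M₀)
    (hadd : ∀ x ∈ M₀, ∀ y ∈ M₀, x + y ∈ M₀) (hsmul : ∀ r ∈ R₀, ∀ x ∈ M₀, r • x ∈ M₀)
    {φ : M → R} (hφadd : ∀ x ∈ M₀, ∀ y ∈ M₀, φ (x + y) = φ x + φ y)
    (hφsmul : ∀ r ∈ R₀, ∀ x ∈ M₀, φ (r • x) = r * φ x) :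
    ∃ F : M →ₗ[R] R, EqOn F φ M₀ := by
  choose N hN using hM₀
  have eval_eq {x : M} {n : ℕ} (hn : c ^ n • x ∈ M₀) :
      (c ^ N x)⁻¹ • φ (c ^ N x • x) = (c ^ n)⁻¹ • φ (c ^ n • x) :=
    inv_pow_smul_apply_pow_smul_eq hc hcR₀ hφsmul (hN x) hn
  refine ⟨{ toFun := fun x => (c ^ N x)⁻¹ • φ (c ^ N x • x), map_add' := ?_, map_smul' := ?_ },
    fun x hx => ?_⟩
  · intro x y
    have hx := pow_smul_mem_of_le hcR₀ hsmul (Nat.le_add_right (N x) (N y)) (hN x)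
    have hy := pow_smul_mem_of_le hcR₀ hsmul (Nat.le_add_left (N y) (N x)) (hN y)
    have hxy : c ^ (N x + N y) • (x + y) ∈ M₀ := by rw [smul_add]; exact hadd _ hx _ hy
    rw [eval_eq hx, eval_eq hy, eval_eq hxy, smul_add, hφadd _ hx _ hy, smul_add]
  · intro r x
    obtain ⟨k, hk⟩ := hR₀ r
    have hrx : c ^ (k + N x) • r • x = (c ^ k • r) • c ^ N x • x := by
      rw [pow_add, mul_smul, smul_assoc, smul_comm r]
    rw [eval_eq (n := k + N x) (by rw [hrx]; exact hsmul _ hk _ (hN x)), hrx,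
      hφsmul _ hk _ (hN x), smul_mul_assoc, smul_smul, RingHom.id_apply, smul_eq_mul, mul_smul_comm]
    congr 1
    rw [pow_add]
    field_simp
  · simpa using eval_eq (n := 0) (by simpa using hx)

theorem LinearMap.eq_of_eqOn_absorbing {N : Type*} [AddCommGroup N] [Module R N] [Module 𝕜 N]
    [IsScalarTower 𝕜 R N] {M₀ : Set M} {c : 𝕜} (hc : c ≠ 0)
    (hM₀ : ∀ x : M, ∃ n : ℕ, c ^ n • x ∈ M₀) {f g : M →ₗ[R] N} (h : EqOn f g M₀) : f = g := by
  ext x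
  obtain ⟨n, hn⟩ := hM₀ x
  have := h hn
  rw [map_smul_of_tower, map_smul_of_tower] at this
  exact smul_right_injective N (pow_ne_zero n hc) this

end Extension

section Normed

variable {𝕜 R M : Type*} [NormedRing R] [SeminormedAddCommGroup M] [Module R M]
  [IsBoundedSMul R M]

theorem norm_smul_le_mul_norm_one [NormedField 𝕜] [NormedAlgebra 𝕜 R] [Module 𝕜 M]
    [IsScalarTower 𝕜 R M] (c : 𝕜) (x : M) : ‖c • x‖ ≤ ‖c‖ * ‖(1 : R)‖ * ‖x‖ := by
  rw [← algebraMap_smul R c x, ← norm_algebraMap R c]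
  exact norm_smul_le _ _

variable (R) in
theorem eventually_forall_pow_smul_mem [NormedField 𝕜] [NormedAlgebra 𝕜 R] [Module 𝕜 M]
    [IsScalarTower 𝕜 R M] {c : 𝕜} (hc : ‖c‖ < 1) {S U : Set M} (hS : Bornology.IsBounded S)
    (hU : U ∈ 𝓝 0) : ∀ᶠ n in atTop, ∀ x ∈ S, c ^ n • x ∈ U := by
  obtain ⟨ε, hε, hball⟩ := Metric.mem_nhds_iff.mp hU
  obtain ⟨B, hB⟩ := hS.exists_norm_le
  have hlim : Tendsto (fun n => ‖c‖ ^ n * ‖(1 : R)‖ * B) atTop (𝓝 0) := by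
    simpa using ((tendsto_pow_atTop_nhds_zero_of_lt_one (norm_nonneg c) hc).mul_const
      ‖(1 : R)‖).mul_const B
  filter_upwards [hlim.eventually (gt_mem_nhds hε)] with n hn x hx
  refine hball (mem_ball_zero_iff.mpr ?_)
  calc ‖c ^ n • x‖ ≤ ‖c ^ n‖ * ‖(1 : R)‖ * ‖x‖ := norm_smul_le_mul_norm_one (c ^ n) x
    _ ≤ ‖c‖ ^ n * ‖(1 : R)‖ * B := by rw [norm_pow]; gcongr; exact hB x hx
    _ < ε := hn

variable (R) in
theorem exists_pow_smul_mem_of_mem_nhds [NormedField 𝕜] [NormedAlgebra 𝕜 R] [Module 𝕜 M]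
    [IsScalarTower 𝕜 R M] {c : 𝕜} (hc : ‖c‖ < 1) {U : Set M} (hU : U ∈ 𝓝 0) (x : M) :
    ∃ n : ℕ, c ^ n • x ∈ U :=
  (eventually_forall_pow_smul_mem R hc Bornology.isBounded_singleton hU).exists.imp
    fun _ h => h x rfl

theorem exists_pos_forall_mapsTo_of_norm_le {E F : Type*} [SeminormedAddCommGroup E]
    [SeminormedAddCommGroup F] {E₀ : Set E} {F₀ : Set F} (hE₀ : Bornology.IsBounded E₀)
    (hF₀ : F₀ ∈ 𝓝 0) :
    ∃ ε > 0, ∀ g : E → F, (∀ x, ‖g x‖ ≤ ε * ‖x‖) → MapsTo g E₀ F₀ := by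
  obtain ⟨δ, hδ, hball⟩ := Metric.mem_nhds_iff.mp hF₀
  obtain ⟨B, hB⟩ := hE₀.exists_norm_le
  have hB' : 0 < |B| + 1 := by positivity
  refine ⟨δ / (|B| + 1), by positivity, fun g hg x hx => hball (mem_ball_zero_iff.mpr ?_)⟩
  calc ‖g x‖ ≤ δ / (|B| + 1) * ‖x‖ := hg x
    _ ≤ δ / (|B| + 1) * |B| := by gcongr; exact (hB x hx).trans (le_abs_self B)
    _ < δ := by rw [div_mul_eq_mul_div, div_lt_iff₀ hB']; linarith

end Normed

theorem exists_forall_norm_apply_le_of_mapsTo (𝕜 : Type*) {R M : Type*}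
    [NontriviallyNormedField 𝕜] [NormedRing R] [NormedAlgebra 𝕜 R] [NormedAddCommGroup M]
    [Module R M] [IsBoundedSMul R M] [Module 𝕜 M] [IsScalarTower 𝕜 R M] {M₀ : Set M}
    {R₀ : Set R} (hM₀ : M₀ ∈ 𝓝 0) (hR₀ : Bornology.IsBounded R₀) :
    ∃ C, ∀ g : M →ₗ[R] R, MapsTo g M₀ R₀ → ∀ x, ‖g x‖ ≤ C * ‖x‖ := by
  obtain ⟨c, hc⟩ := NormedField.exists_one_lt_norm 𝕜
  obtain ⟨δ, hδ, hball⟩ := Metric.mem_nhds_iff.mp hM₀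
  obtain ⟨B, hB⟩ := hR₀.exists_norm_le
  refine ⟨‖c‖ * (‖(1 : R)‖ + 1) * B / δ, fun g hg x => ?_⟩
  rcases eq_or_ne x 0 with rfl | hx
  · simp
  obtain ⟨n, hn_le, hlt_n⟩ :=
    exists_mem_Ico_zpow (show 0 < (‖(1 : R)‖ + 1) * ‖x‖ / δ by positivity) hc
  set d := c ^ (n + 1)
  have hd : d ≠ 0 := zpow_ne_zero _ (norm_pos_iff.mp (one_pos.trans hc))
  have hmem : d⁻¹ • x ∈ M₀ := hball <| mem_ball_zero_iff.mpr <| calc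
    ‖d⁻¹ • x‖ ≤ ‖d‖⁻¹ * ‖(1 : R)‖ * ‖x‖ := by simpa using norm_smul_le_mul_norm_one d⁻¹ x
    _ ≤ ‖d‖⁻¹ * ((‖(1 : R)‖ + 1) * ‖x‖) := by rw [mul_assoc]; gcongr; linarith
    _ < δ := by
      rw [norm_zpow, inv_mul_lt_iff₀ (by positivity)]
      rwa [div_lt_iff₀ hδ] at hlt_n
  have hB0 : 0 ≤ B := (norm_nonneg _).trans (hB _ (hg hmem))
  calc ‖g x‖ = ‖d • g (d⁻¹ • x)‖ := by rw [LinearMap.map_smul_of_tower, smul_inv_smul₀ hd]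
    _ = ‖d‖ * ‖g (d⁻¹ • x)‖ := norm_smul _ _
    _ ≤ ‖c‖ ^ (n + 1) * B := by rw [norm_zpow]; gcongr; exact hB _ (hg hmem)
    _ = ‖c‖ * ‖c‖ ^ n * B := by rw [zpow_add_one₀ (by positivity)]; ring
    _ ≤ ‖c‖ * ((‖(1 : R)‖ + 1) * ‖x‖ / δ) * B := by gcongr
    _ = ‖c‖ * (‖(1 : R)‖ + 1) * B / δ * ‖x‖ := by ring

theorem stmt18_general (p : ℕ) [Fact p.Prime]
    (R : Type u) [NormedRing R] [NormedAlgebra ℚ_[p] R]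
    (R₀ : Subring R) (hR₀o : IsOpen (R₀ : Set R)) (hR₀b : Bornology.IsBounded (R₀ : Set R))
    (M : Type u) [NormedAddCommGroup M] [Module R M] [IsBoundedSMul R M]
    (M₀ : Set M) (h0 : (0 : M) ∈ M₀)
    (hadd : ∀ x ∈ M₀, ∀ y ∈ M₀, x + y ∈ M₀)
    (hsmul : ∀ r ∈ R₀, ∀ x ∈ M₀, r • x ∈ M₀)
    (hopen : IsOpen M₀) (hbdd : Bornology.IsBounded M₀) :
    (∀ φ : M → R,
        (∀ x ∈ M₀, ∀ y ∈ M₀, φ (x + y) = φ x + φ y) →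
        (∀ r ∈ R₀, ∀ x ∈ M₀, φ (r • x) = r * φ x) →
        (∀ x ∈ M₀, φ x ∈ R₀) →
        ∃! f : M →L[R] R, ∀ x ∈ M₀, f x = φ x) ∧
    (∀ f : M →L[R] R, ∃ n : ℕ, ∀ x ∈ M₀, (p : R) ^ n * f x ∈ R₀) ∧
    (∃ ε : ℝ, 0 < ε ∧ ∀ f : M →L[R] R, (∀ x : M, ‖f x‖ ≤ ε * ‖x‖) → ∀ x ∈ M₀, f x ∈ R₀) ∧
    (∃ C : ℝ, ∀ f : M →L[R] R, (∀ x ∈ M₀, f x ∈ R₀) → ∀ x : M, ‖f x‖ ≤ C * ‖x‖) := by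
  let _ : Module ℚ_[p] M := Module.compHom M (algebraMap ℚ_[p] R)
  have : IsScalarTower ℚ_[p] R M := IsScalarTower.of_algebraMap_smul fun _ _ => rfl
  have hp : ‖(p : ℚ_[p])‖ < 1 := Padic.norm_p_lt_one
  have hp0 : (p : ℚ_[p]) ≠ 0 := Nat.cast_ne_zero.mpr (Fact.out : p.Prime).ne_zero
  have hpR₀ : algebraMap ℚ_[p] R p ∈ R₀ := by rw [map_natCast]; exact natCast_mem R₀ p
  have hM₀ : M₀ ∈ 𝓝 0 := hopen.mem_nhds h0
  have hR₀ : (R₀ : Set R) ∈ 𝓝 0 := hR₀o.mem_nhds R₀.zero_mem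
  have hM₀abs := exists_pow_smul_mem_of_mem_nhds R hp hM₀
  have hR₀abs := exists_pow_smul_mem_of_mem_nhds R hp hR₀
  obtain ⟨C, hC⟩ := exists_forall_norm_apply_le_of_mapsTo ℚ_[p] hM₀ hR₀b
  obtain ⟨ε, hε, hsmall⟩ := exists_pos_forall_mapsTo_of_norm_le hbdd hR₀
  refine ⟨fun φ hφadd hφsmul hφmem => ?_, fun f => ?_, ⟨ε, hε, fun f hf => hsmall f hf⟩,
    ⟨C, fun f hf => hC f.toLinearMap hf⟩⟩
  · obtain ⟨F, hF⟩ := exists_linearMap_eqOn_of_absorbing R₀ hp0 hpR₀ hR₀abs hM₀abs hadd hsmul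
      hφadd hφsmul
    refine ⟨F.mkContinuous C (hC F fun x hx => hF hx ▸ hφmem x hx), hF, fun g hg => ?_⟩
    exact ContinuousLinearMap.coe_injective <|
      LinearMap.eq_of_eqOn_absorbing hp0 hM₀abs fun x hx => (hg x hx).trans (hF hx).symm
  · have hpre : f ⁻¹' R₀ ∈ 𝓝 0 :=
      f.continuous.continuousAt.preimage_mem_nhds (by rw [map_zero]; exact hR₀)
    obtain ⟨n, hn⟩ := (eventually_forall_pow_smul_mem R hp hbdd hpre).exists
    refine ⟨n, fun x hx => ?_⟩
    simpa [ContinuousLinearMap.map_smul_of_tower, Algebra.smul_def] using hn x hx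

/-- Let `R` be a `ℚ_p`-Banach algebra with ring of definition `R₀`, `M` a potentially
orthonormalizable `R`-Banach module (there is a family `(b i)` with `‖Σ aᵢ • bᵢ‖`
uniformly comparable to `sup ‖aᵢ‖` on finitely supported families and with dense span), and
let `M₀` be any open bounded `R₀`-submodule of `M`.  Then the natural map
`Hom_{R₀}(M₀, R₀)[1/p] → Hom_{R,cont}(M, R)` is an isomorphism onto the continuous dual
`M′`: every `R₀`-linear `R₀`-valued functional on `M₀` extends uniquely to a continuous
`R`-linear functional on `M`, and every continuous functional lands in `R₀` on `M₀` after
multiplying by a power of `p`.  Moreover the operator-norm topology on `M′` is the gauge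
topology of the lattice `L = Hom_{R₀}(M₀, R₀)`: `L` contains an operator-norm ball around
`0` and is operator-norm bounded. -/
theorem stmt18 (p : ℕ) [Fact p.Prime]
    (R : Type u) [NormedRing R] [NormedAlgebra ℚ_[p] R] [CompleteSpace R]
    (R₀ : Subring R) (hR₀o : IsOpen (R₀ : Set R)) (hR₀b : Bornology.IsBounded (R₀ : Set R))
    (M : Type u) [NormedAddCommGroup M] [Module R M] [IsBoundedSMul R M] [CompleteSpace M]
    (hpo : ∃ (I : Type u) (b : I → M) (C₁ C₂ : ℝ), 0 < C₁ ∧ 0 < C₂ ∧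
      (∀ a : I →₀ R,
        C₁ * (⨆ i, ‖a i‖) ≤ ‖a.sum fun i r => r • b i‖ ∧
          ‖a.sum fun i r => r • b i‖ ≤ C₂ * (⨆ i, ‖a i‖)) ∧
      DenseRange fun a : I →₀ R => a.sum fun i r => r • b i)
    (M₀ : Set M) (h0 : (0 : M) ∈ M₀)
    (hadd : ∀ x ∈ M₀, ∀ y ∈ M₀, x + y ∈ M₀)
    (hsmul : ∀ r ∈ R₀, ∀ x ∈ M₀, r • x ∈ M₀)
    (hopen : IsOpen M₀) (hbdd : Bornology.IsBounded M₀) :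
    (∀ φ : M → R,
        (∀ x ∈ M₀, ∀ y ∈ M₀, φ (x + y) = φ x + φ y) →
        (∀ r ∈ R₀, ∀ x ∈ M₀, φ (r • x) = r * φ x) →
        (∀ x ∈ M₀, φ x ∈ R₀) →
        ∃! f : M →L[R] R, ∀ x ∈ M₀, f x = φ x) ∧
    (∀ f : M →L[R] R, ∃ n : ℕ, ∀ x ∈ M₀, (p : R) ^ n * f x ∈ R₀) ∧
    (∃ ε : ℝ, 0 < ε ∧ ∀ f : M →L[R] R, (∀ x : M, ‖f x‖ ≤ ε * ‖x‖) → ∀ x ∈ M₀, f x ∈ R₀) ∧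
    (∃ C : ℝ, ∀ f : M →L[R] R, (∀ x ∈ M₀, f x ∈ R₀) → ∀ x : M, ‖f x‖ ≤ C * ‖x‖) :=
  stmt18_general p R R₀ hR₀o hR₀b M M₀ h0 hadd hsmul hopen hbdd
end
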